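/- Let f(x) = -(4/3)x + Ω(1/x, 0) + 2·Ω(1/x, 1/(2x)) for x > 0, where Ω(x,y) = ∑_{n∈ℤ} max(0, 1 - |n·x - y|)². Then f achieves a unique global minimum at x = Λ, the unique root of 2X³ - 6X + 3 lying in the interval (1/2, 1), and the minimum value f(Λ) = (4/3)Λ² - 2Λ + 1 is a root of the polynomial 3X³ - 33X² + 33X - 7. -/

import Mathlib

/-- `Ω(x,y) = ∑_{n∈ℤ} max(0, 1 - |n·x - y|)²`. -/
noncomputable def Omega (x y : ℝ) : ℝ := ∑' n : ℤ, (max 0 (1 - |(n : ℝ) * x - y|)) ^ 2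

/-- `f(x) = -(4/3)x + Ω(1/x, 0) + 2·Ω(1/x, 1/(2x))` for `x > 0`. -/
noncomputable def f (x : ℝ) : ℝ :=
  -(4 / 3) * x + Omega (1 / x) 0 + 2 * Omega (1 / x) (1 / (2 * x))

/-!
Write `u = 1/x` and `φ(t) = tentSq t = max(0, 1 - t)²`. Splitting the sum over `ℤ` at `n = 0`
gives `Ω(u, c u) = ∑ₖ φ((k + 1 - c) u) + φ(c u) + ∑ₖ φ((k + 1 + c) u)` for `0 ≤ c ≤ 1`.
For `x ≤ 1` only the terms `k = 0` survive and `f` is an explicit rational function whose only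
critical point in `(1/2, 1]` is the root `Λ` of `2X³ - 6X + 3`; on `(0, 1/2]` it is
`1 - 4x/3 ≥ 1/3 > f Λ`. For `x > 1` the two series are bounded below by the trapezoid rule,
which overestimates integrals of the convex function `φ`; the resulting polynomial bound gives
`f x ≥ 1/3` again.
-/

open Finset

noncomputable def tentSq (t : ℝ) : ℝ := max 0 (1 - t) ^ 2

/-- `∫_t^∞ tentSq + (h/2) tentSq t`. -/
noncomputable def trapezoidTail (h t : ℝ) : ℝ := max 0 (1 - t) ^ 3 / 3 + h / 2 * tentSq t

lemma tentSq_eq_zero {t : ℝ} (ht : 1 ≤ t) : tentSq t = 0 := by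
  rw [tentSq, max_eq_left (by linarith)]
  norm_num

lemma tentSq_of_le_one {t : ℝ} (ht : t ≤ 1) : tentSq t = (1 - t) ^ 2 := by
  rw [tentSq, max_eq_right (by linarith)]

lemma trapezoidTail_eq_zero {h t : ℝ} (ht : 1 ≤ t) : trapezoidTail h t = 0 := by
  rw [trapezoidTail, tentSq_eq_zero ht, max_eq_left (by linarith)]
  norm_num

lemma one_le_add_mul_of_ceil_le {u c : ℝ} (hu : 0 < u) {k : ℕ} (hk : ⌈1 / u - c⌉₊ ≤ k) :
    1 ≤ (k + c) * u := by
  have : 1 / u ≤ k + c := by linarith [(Nat.le_ceil (1 / u - c)).trans (Nat.cast_le.2 hk)]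
  rwa [div_le_iff₀ hu] at this

lemma summable_tentSq_add_mul {u : ℝ} (hu : 0 < u) (c : ℝ) :
    Summable fun k : ℕ => tentSq ((k + c) * u) :=
  summable_of_ne_finset_zero (s := range ⌈1 / u - c⌉₊) fun _ hk =>
    tentSq_eq_zero (one_le_add_mul_of_ceil_le hu (by simpa using hk))

-- The trapezoid rule overestimates the integral of the convex function `tentSq` over `[t, t + h]`.
lemma trapezoidTail_le {h : ℝ} (hh : 0 < h) (t : ℝ) :
    trapezoidTail h t ≤ trapezoidTail h (t + h) + h * tentSq t := by
  simp only [trapezoidTail, tentSq]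
  rcases le_or_gt (1 - t) 0 with h₁ | h₁
  · rw [max_eq_left h₁, max_eq_left (by linarith)]
    norm_num
  rw [max_eq_right h₁.le]
  rcases le_or_gt (1 - (t + h)) 0 with h₂ | h₂
  · rw [max_eq_left h₂]
    nlinarith
  · rw [max_eq_right h₂.le]
    nlinarith [pow_pos hh 3]

lemma trapezoidTail_le_add_sum {u : ℝ} (hu : 0 < u) (c : ℝ) (N : ℕ) :
    trapezoidTail u (c * u) ≤
      trapezoidTail u ((N + c) * u) + u * ∑ k ∈ range N, tentSq ((k + c) * u) := by
  induction N with
  | zero => simp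
  | succ N ih =>
    have hstep := trapezoidTail_le hu ((N + c) * u)
    rw [show (N + c) * u + u = ((N + 1 : ℕ) + c) * u by push_cast; ring] at hstep
    rw [sum_range_succ]
    linarith

lemma trapezoidTail_le_mul_tsum {u : ℝ} (hu : 0 < u) (c : ℝ) :
    trapezoidTail u (c * u) ≤ u * ∑' k : ℕ, tentSq ((k + c) * u) := by
  set N := ⌈1 / u - c⌉₊
  calc trapezoidTail u (c * u)
      ≤ trapezoidTail u ((N + c) * u) + u * ∑ k ∈ range N, tentSq ((k + c) * u) :=
        trapezoidTail_le_add_sum hu c N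
    _ = u * ∑ k ∈ range N, tentSq ((k + c) * u) := by
        rw [trapezoidTail_eq_zero (one_le_add_mul_of_ceil_le hu le_rfl), zero_add]
    _ ≤ u * ∑' k : ℕ, tentSq ((k + c) * u) :=
        mul_le_mul_of_nonneg_left
          (Summable.sum_le_tsum _ (fun _ _ => sq_nonneg _) (summable_tentSq_add_mul hu c)) hu.le

lemma Omega_mul_eq {u c : ℝ} (hu : 0 < u) (hc0 : 0 ≤ c) (hc1 : c ≤ 1) :
    Omega u (c * u) = ∑' k : ℕ, tentSq ((k + (1 - c)) * u) + tentSq (c * u) +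
      ∑' k : ℕ, tentSq ((k + (1 + c)) * u) := by
  have hpos : ∀ k : ℕ, tentSq |(((k : ℤ) + 1 : ℤ) : ℝ) * u - c * u| =
      tentSq ((k + (1 - c)) * u) := fun k => by
    rw [abs_of_nonneg (by push_cast; nlinarith)]
    push_cast
    ring_nf
  have hneg : ∀ k : ℕ, tentSq |((-((k : ℤ) + 1) : ℤ) : ℝ) * u - c * u| =
      tentSq ((k + (1 + c)) * u) := fun k => by
    rw [abs_of_nonpos (by push_cast; nlinarith)]
    push_cast
    ring_nf
  change ∑' n : ℤ, tentSq |(n : ℝ) * u - c * u| = _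
  rw [tsum_of_add_one_of_neg_add_one (by simpa only [hpos] using summable_tentSq_add_mul hu _)
    (by simpa only [hneg] using summable_tentSq_add_mul hu _)]
  simp only [hpos, hneg, Int.cast_zero, zero_mul, zero_sub, abs_neg, abs_of_nonneg
    (mul_nonneg hc0 hu.le)]

lemma tsum_tentSq_add_mul_of_one_le {u c : ℝ} (hu : 1 ≤ u) (hc : 0 ≤ c) :
    ∑' k : ℕ, tentSq ((k + c) * u) = tentSq (c * u) := by
  rw [tsum_eq_single 0 fun k hk => tentSq_eq_zero ?_]
  · simp
  have : (1 : ℝ) ≤ k := by exact_mod_cast Nat.one_le_iff_ne_zero.2 hk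
  nlinarith

lemma Omega_mul_eq_of_one_le {u c : ℝ} (hu : 1 ≤ u) (hc0 : 0 ≤ c) (hc1 : c ≤ 1) :
    Omega u (c * u) = tentSq ((1 - c) * u) + tentSq (c * u) := by
  rw [Omega_mul_eq (by linarith) hc0 hc1, tsum_tentSq_add_mul_of_one_le hu (by linarith),
    tsum_tentSq_add_mul_of_one_le hu (by linarith),
    tentSq_eq_zero (t := (1 + c) * u) (by nlinarith), add_zero]

lemma trapezoidTail_add_le_mul_Omega {u c : ℝ} (hu : 0 < u) (hc0 : 0 ≤ c) (hc1 : c ≤ 1) :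
    trapezoidTail u ((1 - c) * u) + u * tentSq (c * u) + trapezoidTail u ((1 + c) * u) ≤
      u * Omega u (c * u) := by
  rw [Omega_mul_eq hu hc0 hc1, mul_add, mul_add]
  linarith [trapezoidTail_le_mul_tsum hu (1 - c), trapezoidTail_le_mul_tsum hu (1 + c)]

lemma f_eq_of_le_one {x : ℝ} (hx : 0 < x) (hx1 : x ≤ 1) :
    f x = -(4 / 3) * x + 1 + 4 * tentSq (1 / (2 * x)) := by
  have hu : 1 ≤ 1 / x := by rwa [le_div_iff₀ hx, one_mul]
  have h0 := Omega_mul_eq_of_one_le hu le_rfl zero_le_one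
  have hhalf := Omega_mul_eq_of_one_le hu (c := 1 / 2) (by norm_num) (by norm_num)
  rw [zero_mul, sub_zero, one_mul, tentSq_eq_zero hu, tentSq_of_le_one zero_le_one] at h0
  rw [show (1 - 1 / 2 : ℝ) = 1 / 2 by norm_num, show 1 / 2 * (1 / x) = 1 / (2 * x) by ring]
    at hhalf
  rw [f, h0, hhalf]
  ring

lemma f_eq_of_le_half {x : ℝ} (hx : 0 < x) (hx2 : x ≤ 1 / 2) : f x = 1 - 4 / 3 * x := by
  rw [f_eq_of_le_one hx (by linarith),
    tentSq_eq_zero (by rw [le_div_iff₀ (by positivity)]; linarith)]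
  ring

lemma f_eq_of_half_lt {x : ℝ} (hx2 : 1 / 2 < x) (hx1 : x ≤ 1) :
    f x = -(4 / 3) * x + 1 + 4 * (1 - 1 / (2 * x)) ^ 2 := by
  rw [f_eq_of_le_one (by linarith) hx1,
    tentSq_of_le_one (by rw [div_le_iff₀ (by positivity)]; linarith)]

lemma four_thirds_add_third_le_trapezoidTail_sum {u : ℝ} (hu : 0 < u) (hu1 : u ≤ 1) :
    4 / 3 + u / 3 ≤ 2 * trapezoidTail u u + u +
      2 * (trapezoidTail u (u / 2) + u * tentSq (u / 2) + trapezoidTail u (3 * u / 2)) := by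
  simp only [trapezoidTail, tentSq]
  rw [max_eq_right (by linarith : (0 : ℝ) ≤ 1 - u),
    max_eq_right (by linarith : (0 : ℝ) ≤ 1 - u / 2)]
  rcases le_or_gt u (2 / 3) with hc | hc
  · rw [max_eq_right (by linarith : (0 : ℝ) ≤ 1 - 3 * u / 2)]
    nlinarith [mul_nonneg (mul_nonneg (by linarith : (0 : ℝ) ≤ 2 / 3 - u) hu.le)
      (by linarith : (0 : ℝ) ≤ 1 - u), sq_nonneg (4 * u - 3)]
  · rw [max_eq_left (by linarith : 1 - 3 * u / 2 ≤ (0 : ℝ))]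
    nlinarith [mul_pos hu (by positivity : (0 : ℝ) < (u - 5 / 4) ^ 2 + 5 / 48)]

lemma one_third_le_f {x : ℝ} (hx : 1 ≤ x) : 1 / 3 ≤ f x := by
  set u := 1 / x
  have hu : 0 < u := by positivity
  have hu1 : u ≤ 1 := by rw [div_le_one (by linarith)]; exact hx
  have hux : u * x = 1 := one_div_mul_cancel (by positivity)
  have h0 : 2 * trapezoidTail u u + u ≤ u * Omega u 0 := by
    have := trapezoidTail_add_le_mul_Omega hu le_rfl zero_le_one
    simp only [sub_zero, add_zero, one_mul, zero_mul, tentSq_of_le_one zero_le_one] at this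
    linarith
  have hhalf : trapezoidTail u (u / 2) + u * tentSq (u / 2) + trapezoidTail u (3 * u / 2) ≤
      u * Omega u (u / 2) := by
    have := trapezoidTail_add_le_mul_Omega hu (c := 1 / 2) (by norm_num) (by norm_num)
    convert this using 3 <;> ring_nf
  have hfx : u * f x = -(4 / 3) + u * Omega u 0 + 2 * (u * Omega u (u / 2)) := by
    rw [f, show 1 / (2 * x) = u / 2 by ring]
    linear_combination (-(4 / 3)) * hux
  have := four_thirds_add_third_le_trapezoidTail_sum hu hu1
  nlinarith

lemma f_eq_of_root {Λ : ℝ} (hΛroot : 2 * Λ ^ 3 - 6 * Λ + 3 = 0) (hΛ1 : 1 / 2 < Λ)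
    (hΛ2 : Λ ≤ 1) :
    f Λ = 4 / 3 * Λ ^ 2 - 2 * Λ + 1 := by
  rw [f_eq_of_half_lt hΛ1 hΛ2]
  field_simp
  linear_combination (-4) * (2 * Λ - 1) * hΛroot

lemma f_root_lt_f {Λ x : ℝ} (hΛroot : 2 * Λ ^ 3 - 6 * Λ + 3 = 0) (hΛ1 : 1 / 2 < Λ)
    (hΛ2 : Λ < 1) (hx2 : 1 / 2 < x) (hx1 : x ≤ 1) (hne : x ≠ Λ) : f Λ < f x := by
  have hΛ : Λ < 3 / 4 := by
    nlinarith [mul_pos (mul_pos (by linarith : 0 < Λ) (by linarith : 0 < 1 - Λ))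
      (by linarith : 0 < 1 + Λ)]
  have hdiff : f x - f Λ = (x - Λ) ^ 2 * (3 - 4 * Λ ^ 2 * x) / (3 * x ^ 2 * Λ ^ 2) := by
    rw [f_eq_of_half_lt hx2 hx1, f_eq_of_half_lt hΛ1 hΛ2.le]
    field_simp
    linear_combination (8 * x * (Λ - x)) * hΛroot
  have : 0 < (x - Λ) ^ 2 * (3 - 4 * Λ ^ 2 * x) / (3 * x ^ 2 * Λ ^ 2) := by
    have hsq : 0 < (x - Λ) ^ 2 := sq_pos_of_ne_zero (sub_ne_zero.2 hne)
    apply div_pos (mul_pos hsq (by nlinarith))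
    positivity
  linarith

theorem stmt_10_general (Λ : ℝ) (hΛroot : 2 * Λ ^ 3 - 6 * Λ + 3 = 0)
    (hΛ1 : 1 / 2 < Λ) (hΛ2 : Λ < 1) :
    (∀ x : ℝ, 0 < x → x ≠ Λ → f Λ < f x) ∧
    f Λ = 4 / 3 * Λ ^ 2 - 2 * Λ + 1 ∧
    3 * (f Λ) ^ 3 - 33 * (f Λ) ^ 2 + 33 * (f Λ) - 7 = 0 := by
  have hfΛ := f_eq_of_root hΛroot hΛ1 hΛ2.le
  have hfΛ_lt : f Λ < 1 / 3 := by rw [hfΛ]; nlinarith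
  refine ⟨fun x hx hne => ?_, hfΛ, ?_⟩
  · rcases le_or_gt x (1 / 2) with hx2 | hx2
    · rw [f_eq_of_le_half hx hx2]
      linarith
    rcases le_or_gt x 1 with hx1 | hx1
    · exact f_root_lt_f hΛroot hΛ1 hΛ2 hx2 hx1 hne
    · exact hfΛ_lt.trans_le (one_third_le_f hx1.le)
  · rw [hfΛ]
    linear_combination (32 / 9 * Λ ^ 3 - 16 * Λ ^ 2 + 40 / 3 * Λ - 4 / 3) * hΛroot

/-- `f` achieves a unique global minimum (over `x > 0`) at `x = Λ`, the unique root of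
`2X³ - 6X + 3` in `(1/2, 1)`, and the minimum value `f(Λ) = (4/3)Λ² - 2Λ + 1` is a root
of `3X³ - 33X² + 33X - 7`. -/
theorem stmt_10 (Λ : ℝ) (hΛroot : 2 * Λ ^ 3 - 6 * Λ + 3 = 0)
    (hΛ1 : 1 / 2 < Λ) (hΛ2 : Λ < 1)
    (huniq : ∀ y : ℝ, 1 / 2 < y → y < 1 → 2 * y ^ 3 - 6 * y + 3 = 0 → y = Λ) :
    (∀ x : ℝ, 0 < x → x ≠ Λ → f Λ < f x) ∧
    f Λ = 4 / 3 * Λ ^ 2 - 2 * Λ + 1 ∧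
    3 * (f Λ) ^ 3 - 33 * (f Λ) ^ 2 + 33 * (f Λ) - 7 = 0 :=
  stmt_10_general Λ hΛroot hΛ1 hΛ2
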